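/- arXiv:2108.10566 — 2 statements merged into one kernel-verified Lean document; each statement's English description precedes it below -/
import Mathlib

section
/- Fix η ∈ ℝ and suppose ŷ i ≠ −η for all i. Then as β → +∞, each smooth confusion-matrix entry converges to the corresponding hard confusion-matrix entry with threshold t = −η: t̃p(β) → tp, f̃p(β) → fp, f̃n(β) → fn, t̃n(β) → tn. -/
noncomputable def S (u β η : ℝ) : ℝ := 1 / (1 + Real.exp (-β * (u + η)))

/-! `S u β η` is Mathlib's sigmoid evaluated at `β * (u + η)`. Since `u + η ≠ 0`, this argument
tends to `+∞` or `-∞` with `β`, so `S` tends to the indicator of `u ≥ -η`; the confusion-matrix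
entries are finite linear combinations of these limits. -/

open Filter Topology

section Sigmoid

variable {u η : ℝ}

theorem S_eq_sigmoid (u β η : ℝ) : S u β η = Real.sigmoid (β * (u + η)) := by
  rw [S, Real.sigmoid_def, one_div, neg_mul]

theorem tendsto_S_atTop (h : u ≠ -η) :
    Tendsto (fun β : ℝ => S u β η) atTop (𝓝 (if u ≥ -η then 1 else 0)) := by
  simp only [S_eq_sigmoid]
  rcases h.lt_or_gt with hlt | hgt
  · rw [if_neg hlt.not_ge]
    exact Real.tendsto_sigmoid_atBot.comp (tendsto_id.atTop_mul_const_of_neg (by linarith))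
  · rw [if_pos hgt.le]
    exact Real.tendsto_sigmoid_atTop.comp (tendsto_id.atTop_mul_const (by linarith))

theorem tendsto_one_sub_S_atTop (h : u ≠ -η) :
    Tendsto (fun β : ℝ => 1 - S u β η) atTop (𝓝 (if u < -η then 1 else 0)) := by
  convert (tendsto_const_nhds (x := (1 : ℝ))).sub (tendsto_S_atTop h) using 2
  by_cases hlt : u < -η
  · simp [hlt, hlt.not_ge]
  · simp [hlt, le_of_not_gt hlt]

end Sigmoid

theorem smooth_confusion_tendsto_hard (n : ℕ) (yhat y : Fin n → ℝ) (η : ℝ)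
    (hne : ∀ i, yhat i ≠ -η) :
    Filter.Tendsto (fun β : ℝ => ∑ i, S (yhat i) β η * y i) Filter.atTop
      (nhds (∑ i, (if yhat i ≥ -η then (1:ℝ) else 0) * y i)) ∧
    Filter.Tendsto (fun β : ℝ => ∑ i, S (yhat i) β η * (1 - y i)) Filter.atTop
      (nhds (∑ i, (if yhat i ≥ -η then (1:ℝ) else 0) * (1 - y i))) ∧
    Filter.Tendsto (fun β : ℝ => ∑ i, (1 - S (yhat i) β η) * y i) Filter.atTop
      (nhds (∑ i, (if yhat i < -η then (1:ℝ) else 0) * y i)) ∧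
    Filter.Tendsto (fun β : ℝ => ∑ i, (1 - S (yhat i) β η) * (1 - y i)) Filter.atTop
      (nhds (∑ i, (if yhat i < -η then (1:ℝ) else 0) * (1 - y i))) := by
  refine ⟨?_, ?_, ?_, ?_⟩ <;> refine tendsto_finsetSum _ fun i _ => Tendsto.mul_const _ ?_
  exacts [tendsto_S_atTop (hne i), tendsto_S_atTop (hne i),
    tendsto_one_sub_S_atTop (hne i), tendsto_one_sub_S_atTop (hne i)]
end

section
/- Suppose y i ∈ {0,1} for all i and Σᵢ y i > 0, and fix β, η ∈ ℝ. Then the map ŷ ↦ 2·t̃p(ŷ)/(2·t̃p(ŷ) + f̃n(ŷ) + f̃p(ŷ)) from (Fin n → ℝ) to ℝ (the sigmoidF1 score as a function of the prediction vector) is differentiable everywhere; in particular it is a decomposable, tractable surrogate for the F1 metric. -/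
lemma S_pos (u β η : ℝ) : 0 < S u β η := by
  unfold S
  positivity

lemma S_lt_one (u β η : ℝ) : S u β η < 1 := by
  unfold S
  rw [div_lt_one (by positivity)]
  linarith [Real.exp_pos (-β * (u + η))]

lemma S_diff (β η : ℝ) : Differentiable ℝ (fun u => S u β η) := by
  unfold S
  apply Differentiable.div (differentiable_const 1)
  · exact Differentiable.add (differentiable_const 1)
      (Real.differentiable_exp.comp (by fun_prop))
  · intro x
    positivity

theorem sigmoidF1_differentiable (n : ℕ) (y : Fin n → ℝ)
    (hy : ∀ i, y i = 0 ∨ y i = 1) (hpos : 0 < ∑ i, y i) (β η : ℝ) :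
    Differentiable ℝ
      (fun yhat : Fin n → ℝ =>
        2 * (∑ i, S (yhat i) β η * y i) /
          (2 * (∑ i, S (yhat i) β η * y i) + (∑ i, (1 - S (yhat i) β η) * y i) +
            (∑ i, S (yhat i) β η * (1 - y i)))) := by
  have hy0 : ∀ i, 0 ≤ y i := fun i => by rcases hy i with h | h <;> simp [h]
  have hy1 : ∀ i, y i ≤ 1 := fun i => by rcases hy i with h | h <;> simp [h]
  have hSc : ∀ i : Fin n, Differentiable ℝ (fun yhat : Fin n → ℝ => S (yhat i) β η) :=
    fun i => (S_diff β η).comp (differentiable_apply i)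
  have htp : Differentiable ℝ (fun yhat : Fin n → ℝ => ∑ i, S (yhat i) β η * y i) :=
    Differentiable.fun_sum fun i _ => (hSc i).mul_const _
  have hfn : Differentiable ℝ (fun yhat : Fin n → ℝ => ∑ i, (1 - S (yhat i) β η) * y i) :=
    Differentiable.fun_sum fun i _ => ((differentiable_const 1).sub (hSc i)).mul_const _
  have hfp : Differentiable ℝ (fun yhat : Fin n → ℝ => ∑ i, S (yhat i) β η * (1 - y i)) :=
    Differentiable.fun_sum fun i _ => (hSc i).mul_const _
  have hnum : Differentiable ℝ (fun yhat : Fin n → ℝ => 2 * ∑ i, S (yhat i) β η * y i) :=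
    htp.const_mul 2
  have hden : Differentiable ℝ (fun yhat : Fin n → ℝ =>
      2 * (∑ i, S (yhat i) β η * y i) + (∑ i, (1 - S (yhat i) β η) * y i) +
        (∑ i, S (yhat i) β η * (1 - y i))) := (hnum.add hfn).add hfp
  have h0 : ∀ x : Fin n → ℝ,
      2 * (∑ i, S (x i) β η * y i) + (∑ i, (1 - S (x i) β η) * y i) +
        (∑ i, S (x i) β η * (1 - y i)) ≠ 0 := by
    intro x
    have htp0 : 0 ≤ ∑ i, S (x i) β η * y i :=
      Finset.sum_nonneg fun i _ => mul_nonneg (S_pos _ _ _).le (hy0 i)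
    have hfp0 : 0 ≤ ∑ i, S (x i) β η * (1 - y i) :=
      Finset.sum_nonneg fun i _ => mul_nonneg (S_pos _ _ _).le (by linarith [hy1 i])
    have hsum : (∑ i, S (x i) β η * y i) + (∑ i, (1 - S (x i) β η) * y i) = ∑ i, y i := by
      rw [← Finset.sum_add_distrib]
      congr 1; ext i; ring
    nlinarith [hpos, htp0, hfp0, hsum]
  simp only [div_eq_mul_inv]
  exact hnum.mul (hden.inv h0)
end
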